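/- arXiv:1108.5118 — 5 statements merged into one kernel-verified Lean document; each statement's English description precedes it below -/
import Mathlib

section
/- Let F be a local field (finite extension of ℚ_p, p odd) and E/F a totally ramified, tamely ramified extension of degree n. Then (𝒪_E^×)^n ∩ 𝒪_F^× = (𝒪_F^×)^n, i.e., a unit of F that is an n-th power of a unit of E is already an n-th power of a unit of F. -/
/-!
Let `v ∈ 𝒪_E` with `vⁿ = u ∈ 𝒪_F^×`, let `g` be the minimal polynomial of `v` over `𝒪_F`
and `ḡ` its reduction over the residue field `k` of `F`. As `𝒪_E` is local and integral
over `𝒪_F[v] ≅ 𝒪_F[X]/(g)`, the ring `𝒪_F[X]/(g)` is local, hence so is its quotient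
`k[X]/(ḡ)`; so two coprime divisors of `ḡ` cannot both be non-units. Since `p ∤ n`, `ḡ`
divides the separable polynomial `Xⁿ - ū` and is squarefree. Total ramification
(`e = n = e f`) makes the residue fields of `E` and `F` equal, so `ḡ` has a root `a ∈ k`,
and `X - a` is coprime to `ḡ / (X - a)`. Hence `ḡ / (X - a)` is a unit, `g` has degree
one, and `v ∈ 𝒪_F`.
-/

open Polynomial IsLocalRing

namespace AdjoinRoot

variable {R S : Type*} [CommRing R] [CommRing S]

theorem map_mk (f : R →+* S) (p : R[X]) (q : S[X]) (h : q ∣ p.map f) (P : R[X]) :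
    map f p q h (mk p P) = mk q (P.map f) := by
  rw [map, lift_mk, ← aeval_eq, aeval_def, eval₂_map, algebraMap_eq]

theorem map_surjective {f : R →+* S} (hf : Function.Surjective f) (p : R[X]) (q : S[X])
    (h : q ∣ p.map f) : Function.Surjective (map f p q h) := by
  intro x
  obtain ⟨Q, rfl⟩ := mk_surjective x
  obtain ⟨P, rfl⟩ := Polynomial.map_surjective f hf Q
  exact ⟨mk p P, map_mk f p q h P⟩

theorem isLocalRing_map {f : R →+* S} (hf : Function.Surjective f) (p : R[X])
    [IsLocalRing (AdjoinRoot p)] [Nontrivial (AdjoinRoot (p.map f))] :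
    IsLocalRing (AdjoinRoot (p.map f)) :=
  .of_surjective' _ (map_surjective hf p _ dvd_rfl)

theorem not_isUnit_mk {f φ x : R[X]} (hφf : φ ∣ f) (hφ : ¬IsUnit φ) (hφx : φ ∣ x) :
    ¬IsUnit (mk f x) := by
  intro hx
  obtain ⟨y, hy⟩ := hx.exists_right_inv
  obtain ⟨y, rfl⟩ := mk_surjective y
  rw [← map_mul, ← map_one (mk f), mk_eq_mk] at hy
  exact hφ (isUnit_of_dvd_one ((dvd_sub_right (dvd_mul_of_dvd_left hφx y)).mp (hφf.trans hy)))

theorem isUnit_or_isUnit_of_isCoprime {f φ ψ : R[X]} [IsLocalRing (AdjoinRoot f)]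
    (hφψ : IsCoprime φ ψ) (hφ : φ ∣ f) (hψ : ψ ∣ f) : IsUnit φ ∨ IsUnit ψ := by
  obtain ⟨a, b, hab⟩ := hφψ
  by_contra! h
  rcases IsLocalRing.isUnit_or_isUnit_of_add_one (a := mk f (a * φ)) (b := mk f (b * ψ))
    (by rw [← map_add, hab, map_one]) with hu | hu
  · exact not_isUnit_mk hφ h.1 (dvd_mul_left φ a) hu
  · exact not_isUnit_mk hψ h.2 (dvd_mul_left ψ b) hu

end AdjoinRoot

theorem Polynomial.degree_eq_one_of_isLocalRing_adjoinRoot {k : Type*} [Field k] {f : k[X]}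
    [IsLocalRing (AdjoinRoot f)] (hf : Squarefree f) {a : k} (ha : f.IsRoot a) : f.degree = 1 := by
  obtain ⟨t, rfl⟩ := dvd_iff_isRoot.mpr ha
  have hX : Irreducible (X - C a) := irreducible_X_sub_C a
  have hcop : IsCoprime (X - C a) t := hX.coprime_iff_not_dvd.mpr fun ⟨s, hs⟩ =>
    hX.not_isUnit (hf _ ⟨s, by rw [hs, mul_assoc]⟩)
  have ht : IsUnit t := (AdjoinRoot.isUnit_or_isUnit_of_isCoprime hcop (dvd_mul_right _ _)
    (dvd_mul_left _ _)).resolve_left hX.not_isUnit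
  rw [degree_mul, degree_X_sub_C, degree_eq_zero_of_isUnit ht, add_zero]

theorem IsLocalRing.ResidueField.algebraMap_eval_map_residue {A B : Type*} [CommRing A]
    [CommRing B] [Algebra A B] [IsLocalRing A] [IsLocalRing B] [IsLocalHom (algebraMap A B)]
    (g : A[X]) {v : B} {a : ResidueField A} (ha : algebraMap _ (ResidueField B) a = residue B v) :
    algebraMap (ResidueField A) (ResidueField B) ((g.map (residue A)).eval a) =
      residue B (aeval v g) := by
  rw [eval_map, hom_eval₂, ha, aeval_def, hom_eval₂]
  congr 1

section IntegralLocalExtension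

variable {A B : Type*} [CommRing A] [CommRing B] [IsDomain A] [IsDomain B] [Algebra A B]
  [IsIntegrallyClosed A] [Module.IsTorsionFree A B] [Algebra.IsIntegral A B] [IsLocalRing B]

theorem minpoly.isLocalRing_adjoinRoot (v : B) : IsLocalRing (AdjoinRoot (minpoly A v)) := by
  let φ : AdjoinRoot (minpoly A v) →ₐ[A] B := (Algebra.adjoin A {v}).val.comp
    (minpoly.equivAdjoin (Algebra.IsIntegral.isIntegral v)).toAlgHom
  have hφ : Function.Injective φ := Subtype.val_injective.comp (AlgEquiv.injective _)
  have hint : (φ : AdjoinRoot (minpoly A v) →+* B).IsIntegral :=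
    RingHom.IsIntegral.tower_top (algebraMap A _) _ (by
      rw [φ.comp_algebraMap]; exact algebraMap_isIntegral_iff.mpr ‹_›)
  have := hint.isLocalHom hφ
  exact RingHom.domain_isLocalRing (φ : AdjoinRoot (minpoly A v) →+* B)

theorem mem_range_of_pow_eq_algebraMap [IsLocalRing A]
    (hres : Function.Surjective (algebraMap (ResidueField A) (ResidueField B)))
    {n : ℕ} (hn : (n : ResidueField A) ≠ 0) {u : A} (hu : IsUnit u) {v : B}
    (hv : v ^ n = algebraMap A B u) : v ∈ (algebraMap A B).range := by
  have hvint : IsIntegral A v := Algebra.IsIntegral.isIntegral v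
  have hmonic := minpoly.monic hvint
  set g := (minpoly A v).map (residue A)
  have hdvd : g ∣ X ^ n - C (residue A u) := by
    have := Polynomial.map_dvd (residue A)
      (minpoly.isIntegrallyClosed_dvd hvint (p := X ^ n - C u) (by simp [hv]))
    rwa [Polynomial.map_sub, Polynomial.map_pow, map_X, map_C] at this
  have hsq : Squarefree g :=
    (separable_X_pow_sub_C _ hn (hu.map _).ne_zero).squarefree.squarefree_of_dvd hdvd
  have : Nontrivial (AdjoinRoot g) :=
    AdjoinRoot.nontrivial _ (by rw [hmonic.degree_map]; exact (minpoly.degree_pos hvint).ne')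
  have := minpoly.isLocalRing_adjoinRoot (A := A) v
  have := AdjoinRoot.isLocalRing_map residue_surjective (minpoly A v)
  obtain ⟨a, ha⟩ := hres (residue B v)
  have hroot : g.IsRoot a := (algebraMap (ResidueField A) (ResidueField B)).injective <| by
    rw [ResidueField.algebraMap_eval_map_residue _ ha, minpoly.aeval, map_zero, map_zero]
  rw [← minpoly.degree_eq_one_iff, ← hmonic.degree_map (residue A)]
  exact degree_eq_one_of_isLocalRing_adjoinRoot hsq hroot

end IntegralLocalExtension

theorem IsLocalRing.ResidueField.natCast_ne_zero_of_coprime {R : Type*} [CommRing R]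
    [IsLocalRing R] {p n : ℕ} (hp : (p : R) ∈ maximalIdeal R) (hpn : p.Coprime n) :
    (n : ResidueField R) ≠ 0 := by
  have h := (Nat.isCoprime_iff_coprime.mpr hpn).map (Int.castRingHom (ResidueField R))
  rw [eq_intCast, eq_intCast, Int.cast_natCast, Int.cast_natCast, ← map_natCast (residue R),
    (residue_eq_zero_iff _).mpr hp, isCoprime_zero_left] at h
  exact h.ne_zero

section DiscreteValuationRing

variable {A B : Type*} [CommRing A] [IsDomain A] [IsDiscreteValuationRing A] [CommRing B]
  [IsDomain B] [IsDiscreteValuationRing B] [Algebra A B]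

theorem map_maximalIdeal_eq_pow_of_irreducible {πA : A} {πB : B} (hπA : Irreducible πA)
    (hπB : Irreducible πB) {n : ℕ} (u : Bˣ) (h : algebraMap A B πA = πB ^ n * u) :
    (maximalIdeal A).map (algebraMap A B) = maximalIdeal B ^ n := by
  rw [hπA.maximalIdeal_eq, Ideal.map_span, Set.image_singleton, h, hπB.maximalIdeal_eq,
    Ideal.span_singleton_pow, Ideal.span_singleton_mul_right_unit u.isUnit]

variable [Module.Finite A B] [Module.IsTorsionFree A B] {n : ℕ}

theorem residueField_algebraMap_surjective_of_map_maximalIdeal_eq_pow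
    (hrank : Module.finrank A B = n)
    (he : (maximalIdeal A).map (algebraMap A B) = maximalIdeal B ^ n) :
    Function.Surjective (algebraMap (ResidueField A) (ResidueField B)) := by
  have hA : maximalIdeal A ≠ ⊥ := IsDiscreteValuationRing.not_a_field A
  have hB : maximalIdeal B ≠ ⊥ := IsDiscreteValuationRing.not_a_field B
  have : (maximalIdeal B).LiesOver (maximalIdeal A) :=
    ⟨(maximalIdeal_comap (algebraMap A B)).symm⟩
  have hram : (maximalIdeal B).ramificationIdx A = n := by
    rw [Ideal.IsDedekindDomain.ramificationIdx_eq_multiplicity (maximalIdeal A) (maximalIdeal B)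
      (Ideal.map_ne_bot_of_ne_bot hA), he,
      multiplicity_pow_self_of_prime (Ideal.prime_of_isPrime hB inferInstance)]
  have : Unique ((maximalIdeal A).primesOver B) := by
    rw [primesOver_eq B hA]; exact Set.uniqueSingleton _
  have hdefault : ((default : (maximalIdeal A).primesOver B) : Ideal B) = maximalIdeal B := by
    simpa [primesOver_eq B hA] using (default : (maximalIdeal A).primesOver B).2
  have hsum := Ideal.sum_ramification_inertia_eq_finrank (maximalIdeal A) B
  rw [Fintype.sum_unique, hrank, hdefault, hram,
    Ideal.inertiaDeg_eq_of_isMaximal (maximalIdeal A)] at hsum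
  have hinertia : Module.finrank (ResidueField A) (ResidueField B) = 1 :=
    Nat.eq_of_mul_eq_mul_left (hram ▸ Ideal.ramificationIdx_pos _ _) (hsum.trans (mul_one n).symm)
  exact (Algebra.finrank_eq_one_iff_bijective_algebraMap.mp hinertia).2

theorem exists_units_pow_eq_algebraMap_iff (hrank : Module.finrank A B = n)
    (he : (maximalIdeal A).map (algebraMap A B) = maximalIdeal B ^ n)
    (hn : (n : ResidueField A) ≠ 0) (u : Aˣ) :
    (∃ v : Bˣ, algebraMap A B u = (v : B) ^ n) ↔ ∃ w : Aˣ, u = w ^ n := by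
  constructor
  · rintro ⟨v, hv⟩
    obtain ⟨w, hw⟩ := mem_range_of_pow_eq_algebraMap
      (residueField_algebraMap_surjective_of_map_maximalIdeal_eq_pow hrank he) hn u.isUnit hv.symm
    have hwu : w ^ n = u := FaithfulSMul.algebraMap_injective A B (by rw [map_pow, hw, hv])
    have hn0 : n ≠ 0 := by rintro rfl; exact hn Nat.cast_zero
    refine ⟨((isUnit_pow_iff hn0).mp (hwu ▸ u.isUnit)).unit, Units.ext ?_⟩
    simp [hwu]
  · rintro ⟨w, rfl⟩
    exact ⟨Units.map (algebraMap A B) w, by simp⟩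

end DiscreteValuationRing

namespace integralClosure

variable {R K L : Type*} [CommRing R] [CommRing K] [CommRing L] [Algebra R K] [Algebra R L]
  [Algebra K L] [IsScalarTower R K L]

def algHomOfTower : integralClosure R K →ₐ[R] integralClosure R L :=
  ((IsScalarTower.toAlgHom R K L).comp (integralClosure R K).val).codRestrict _
    fun x => x.2.map (IsScalarTower.toAlgHom R K L)

instance : Algebra (integralClosure R K) (integralClosure R L) := algHomOfTower.toAlgebra

instance : IsScalarTower R (integralClosure R K) (integralClosure R L) :=
  .of_algebraMap_eq fun x => (algHomOfTower.commutes x).symm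

instance : IsScalarTower (integralClosure R K) (integralClosure R L) L :=
  .of_algebraMap_eq fun _ => rfl

end integralClosure

theorem PadicInt.natCast_mem_maximalIdeal_integralClosure {p : ℕ} [Fact p.Prime] (F : Type*)
    [Field F] [Algebra ℚ_[p] F] [Algebra ℤ_[p] F] [IsScalarTower ℤ_[p] ℚ_[p] F]
    [IsLocalRing (integralClosure ℤ_[p] F)] :
    (p : integralClosure ℤ_[p] F) ∈ maximalIdeal (integralClosure ℤ_[p] F) := by
  have : FaithfulSMul ℤ_[p] (integralClosure ℤ_[p] F) :=
    (faithfulSMul_iff_algebraMap_injective _ _).mpr <|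
      Function.Injective.of_comp (f := Subtype.val) <| by
        change Function.Injective (algebraMap ℤ_[p] F)
        rw [IsScalarTower.algebraMap_eq ℤ_[p] ℚ_[p] F]
        exact (algebraMap ℚ_[p] F).injective.comp (IsFractionRing.injective ℤ_[p] ℚ_[p])
  rw [← map_natCast (algebraMap ℤ_[p] _)]
  exact map_nonunit _ _ (maximalIdeal_eq_span_p (p := p) ▸ Ideal.mem_span_singleton_self _)

theorem units_pow_inter_eq_pow_general
    {p : ℕ} [Fact p.Prime]
    {F E : Type*} [Field F] [Field E]
    [Algebra ℚ_[p] F] [FiniteDimensional ℚ_[p] F]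
    [Algebra ℤ_[p] F] [IsScalarTower ℤ_[p] ℚ_[p] F]
    [Algebra ℚ_[p] E] [FiniteDimensional ℚ_[p] E]
    [Algebra ℤ_[p] E] [IsScalarTower ℤ_[p] ℚ_[p] E]
    [Algebra F E] [IsScalarTower ℚ_[p] F E]
    [IsDiscreteValuationRing ↥(integralClosure ℤ_[p] F)]
    [IsDiscreteValuationRing ↥(integralClosure ℤ_[p] E)]
    {n : ℕ} (hn : Module.finrank F E = n)
    (htame : ¬ (p ∣ n))
    (htotal : ∀ πF : ↥(integralClosure ℤ_[p] F), Irreducible πF →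
      ∀ πE : ↥(integralClosure ℤ_[p] E), Irreducible πE →
      ∃ u : (↥(integralClosure ℤ_[p] E))ˣ,
        algebraMap F E (πF : F) = ((πE : E)) ^ n * ((u : ↥(integralClosure ℤ_[p] E)) : E)) :
    ∀ u : (↥(integralClosure ℤ_[p] F))ˣ,
      (∃ v : (↥(integralClosure ℤ_[p] E))ˣ,
        algebraMap F E (((u : ↥(integralClosure ℤ_[p] F))) : F) =
          (((v : ↥(integralClosure ℤ_[p] E))) : E) ^ n) ↔
      ∃ w : (↥(integralClosure ℤ_[p] F))ˣ, u = w ^ n := by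
  have : IsScalarTower ℤ_[p] F E := .of_algebraMap_eq fun x => by
    rw [IsScalarTower.algebraMap_apply ℤ_[p] ℚ_[p] E, IsScalarTower.algebraMap_apply ℚ_[p] F E,
      ← IsScalarTower.algebraMap_apply ℤ_[p] ℚ_[p] F]
  set A := integralClosure ℤ_[p] F
  set B := integralClosure ℤ_[p] E
  have : IsFractionRing A F := integralClosure.isFractionRing_of_finite_extension ℚ_[p] F
  have : IsFractionRing B E := integralClosure.isFractionRing_of_finite_extension ℚ_[p] E
  have : Module.IsTorsionFree A B := Module.isTorsionFree_iff_algebraMap_injective.mpr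
    fun x y h => Subtype.ext ((algebraMap F E).injective (congrArg Subtype.val h))
  have : Module.Finite ℤ_[p] B := IsIntegralClosure.finite ℤ_[p] ℚ_[p] E B
  have : Module.Finite A B := .of_restrictScalars_finite ℤ_[p] A B
  have hrank : Module.finrank A B = n := (IsFractionRing.finrank_eq A F B E).symm.trans hn
  obtain ⟨πF, hπF⟩ := IsDiscreteValuationRing.exists_irreducible A
  obtain ⟨πE, hπE⟩ := IsDiscreteValuationRing.exists_irreducible B
  obtain ⟨u₀, hu₀⟩ := htotal πF hπF πE hπE
  have he := map_maximalIdeal_eq_pow_of_irreducible hπF hπE u₀ (Subtype.ext hu₀)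
  have hnk := ResidueField.natCast_ne_zero_of_coprime
    (PadicInt.natCast_mem_maximalIdeal_integralClosure F)
    ((Nat.Prime.coprime_iff_not_dvd Fact.out).mpr htame)
  intro u
  refine (exists_congr fun v => ?_).trans (exists_units_pow_eq_algebraMap_iff hrank he hnk u)
  rw [Subtype.ext_iff, SubmonoidClass.coe_pow]
  rfl

/-- For a totally ramified, tamely ramified degree `n` extension `E/F`
of a finite extension `F` of `ℚ_p` (`p` odd), a unit of `F` that is an `n`-th power
of a unit of `E` is already an `n`-th power of a unit of `F`:
`(𝒪_E^×)^n ∩ 𝒪_F^× = (𝒪_F^×)^n`. -/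
theorem units_pow_inter_eq_pow
    {p : ℕ} [Fact p.Prime] (hp2 : p ≠ 2)
    {F E : Type*} [Field F] [Field E]
    [Algebra ℚ_[p] F] [FiniteDimensional ℚ_[p] F]
    [Algebra ℤ_[p] F] [IsScalarTower ℤ_[p] ℚ_[p] F]
    [Algebra ℚ_[p] E] [FiniteDimensional ℚ_[p] E]
    [Algebra ℤ_[p] E] [IsScalarTower ℤ_[p] ℚ_[p] E]
    [Algebra F E] [IsScalarTower ℚ_[p] F E]
    [IsDiscreteValuationRing ↥(integralClosure ℤ_[p] F)]
    [IsDiscreteValuationRing ↥(integralClosure ℤ_[p] E)]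
    {n : ℕ} (hn : Module.finrank F E = n)
    (htame : ¬ (p ∣ n))
    (htotal : ∀ πF : ↥(integralClosure ℤ_[p] F), Irreducible πF →
      ∀ πE : ↥(integralClosure ℤ_[p] E), Irreducible πE →
      ∃ u : (↥(integralClosure ℤ_[p] E))ˣ,
        algebraMap F E (πF : F) = ((πE : E)) ^ n * ((u : ↥(integralClosure ℤ_[p] E)) : E)) :
    ∀ u : (↥(integralClosure ℤ_[p] F))ˣ,
      (∃ v : (↥(integralClosure ℤ_[p] E))ˣ,
        algebraMap F E (((u : ↥(integralClosure ℤ_[p] F))) : F) =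
          (((v : ↥(integralClosure ℤ_[p] E))) : E) ^ n) ↔
      ∃ w : (↥(integralClosure ℤ_[p] F))ˣ, u = w ^ n :=
  units_pow_inter_eq_pow_general hn htame htotal
end

section
/- Let F be a field of characteristic not 2, n > 1, and τ ∈ F such that x^n − τ is irreducible over F. Let E = F[ω] where ω^n = τ. Then the F-linear embedding of E into M_n(F) given by the regular representation with respect to the basis 1, ω, ω², …, ω^{n−1} has image consisting of matrices X satisfying J·Xᵀ·J = X, where J is the antidiagonal permutation matrix (i.e., every matrix in the image is symmetric about its antidiagonal). -/
/-!
Conjugating the transpose by the involution `J` is an anti-automorphism of `M_n(F)`, so the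
elements of `E` whose regular representation it fixes form a subalgebra (`E` is commutative). The
matrix of multiplication by `ω` is the companion matrix of `X^n - τ`, whose entries `1` on the
subdiagonal and `τ` in the corner are symmetric about the antidiagonal; as `ω` generates `E`, the
subalgebra is everything.
-/

open Matrix

/-- The antidiagonal matrix `J`. -/
def Jmat (n : ℕ) (F : Type*) [Field F] : Matrix (Fin n) (Fin n) F :=
  Matrix.of fun i j => if j = i.rev then 1 else 0

section Jmat

variable {n : ℕ} {F : Type*} [Field F]

theorem Jmat_mul_apply (A : Matrix (Fin n) (Fin n) F) (i j : Fin n) :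
    (Jmat n F * A) i j = A i.rev j := by
  simp [Jmat, mul_apply]

theorem mul_Jmat_apply (A : Matrix (Fin n) (Fin n) F) (i j : Fin n) :
    (A * Jmat n F) i j = A i j.rev := by
  simp [Jmat, mul_apply, eq_comm (a := j), Fin.rev_eq_iff]

theorem Jmat_mul_Jmat : Jmat n F * Jmat n F = 1 := by
  ext i j
  rw [Jmat_mul_apply]
  simp [Jmat, one_apply, eq_comm]

end Jmat

namespace Algebra

variable {R E ι : Type*} [CommRing R] [Fintype ι] [DecidableEq ι]

section Subalgebra

variable [CommRing E] [Algebra R E]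

def leftMulMatrixFixedSubalgebra (b : Module.Basis ι R E) (P : Matrix ι ι R) (hP : P * P = 1) :
    Subalgebra R E where
  carrier := {x | P * (leftMulMatrix b x)ᵀ * P = leftMulMatrix b x}
  mul_mem' {x y} hx hy := by
    simp only [Set.mem_ofPred_eq, map_mul, transpose_mul] at hx hy ⊢
    calc P * ((leftMulMatrix b y)ᵀ * (leftMulMatrix b x)ᵀ) * P
        = (P * (leftMulMatrix b y)ᵀ * P) * (P * (leftMulMatrix b x)ᵀ * P) := by
          simp only [Matrix.mul_assoc, ← Matrix.mul_assoc P P, hP, Matrix.one_mul]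
      _ = leftMulMatrix b x * leftMulMatrix b y := by
          rw [hx, hy, ← map_mul, mul_comm, map_mul]
  add_mem' {x y} hx hy := by
    simp only [Set.mem_ofPred_eq, map_add, transpose_add, Matrix.mul_add, Matrix.add_mul] at hx hy ⊢
    rw [hx, hy]
  algebraMap_mem' r := by
    rw [Set.mem_ofPred_eq, AlgHom.commutes, algebraMap_eq_smul_one, transpose_smul, transpose_one,
      Matrix.mul_smul, Matrix.smul_mul, Matrix.mul_one, hP]

end Subalgebra

/-- In the power basis `1, ω, …, ω^(n-1)` with `ω^n = τ`, multiplication by `ω` shifts the basis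
and wraps `ω^(n-1)` around to `τ • 1`. -/
theorem leftMulMatrix_apply_of_pow_basis [Ring E] [Algebra R E] {n : ℕ} (τ : R) (ω : E)
    (hω : ω ^ n = algebraMap R E τ) (b : Module.Basis (Fin n) R E)
    (hb : ∀ i : Fin n, b i = ω ^ (i : ℕ)) (p q : Fin n) :
    leftMulMatrix b ω p q =
      if (p : ℕ) = q + 1 then 1 else if (p : ℕ) + n = q + 1 then τ else 0 := by
  rw [leftMulMatrix_eq_repr_mul, hb, ← pow_succ']
  by_cases hq : (q : ℕ) + 1 < n
  · rw [← hb ⟨_, hq⟩, b.repr_self, Finsupp.single_apply]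
    simp [Fin.ext_iff, eq_comm, show (p : ℕ) + n ≠ q + 1 by omega]
  · have hn : (q : ℕ) + 1 = n := by omega
    rw [hn, hω, algebraMap_eq_smul_one, ← pow_zero ω, ← hb ⟨0, by omega⟩, map_smul,
      b.repr_self, Finsupp.smul_apply, Finsupp.single_apply]
    simp [Fin.ext_iff, eq_comm, show n ≠ (p : ℕ) by omega]

end Algebra

theorem Jmat_mul_transpose_leftMulMatrix_mul_Jmat_of_pow_basis {F E : Type*} [Field F] [Ring E]
    [Algebra F E] {n : ℕ} (τ : F) (ω : E) (hω : ω ^ n = algebraMap F E τ)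
    (b : Module.Basis (Fin n) F E) (hb : ∀ i : Fin n, b i = ω ^ (i : ℕ)) :
    Jmat n F * (Algebra.leftMulMatrix b ω)ᵀ * Jmat n F = Algebra.leftMulMatrix b ω := by
  ext i j
  rw [mul_Jmat_apply, Jmat_mul_apply, transpose_apply,
    Algebra.leftMulMatrix_apply_of_pow_basis τ ω hω b hb,
    Algebra.leftMulMatrix_apply_of_pow_basis τ ω hω b hb, Fin.val_rev, Fin.val_rev]
  have := i.isLt
  have := j.isLt
  simp only [show n - (j + 1) = n - (i + 1) + 1 ↔ (i : ℕ) = j + 1 by omega,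
    show n - (j + 1) + n = n - (i + 1) + 1 ↔ (i : ℕ) + n = j + 1 by omega]

theorem regular_embedding_J_symmetric_general
    {F E : Type*} [Field F] [Field E] [Algebra F E]
    {n : ℕ} (τ : F)
    (ω : E) (hω : ω ^ n = algebraMap F E τ)
    (b : Module.Basis (Fin n) F E) (hb : ∀ i : Fin n, b i = ω ^ (i : ℕ)) :
    ∀ x : E,
      Jmat n F * (Algebra.leftMulMatrix b x)ᵀ * Jmat n F = Algebra.leftMulMatrix b x := by
  let S := Algebra.leftMulMatrixFixedSubalgebra b (Jmat n F) Jmat_mul_Jmat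
  have hωS : ω ∈ S := Jmat_mul_transpose_leftMulMatrix_mul_Jmat_of_pow_basis τ ω hω b hb
  have hbS : Set.range b ⊆ Subalgebra.toSubmodule S := by
    rintro _ ⟨i, rfl⟩
    rw [hb]
    exact pow_mem hωS _
  exact fun x => Submodule.span_le.mpr hbS (b.mem_span x)

/-- If `x^n - τ` is irreducible over `F` (char `F ≠ 2`, `n > 1`) and
`E = F[ω]` with `ω^n = τ`, then the regular-representation embedding of `E` into
`M_n(F)` with respect to the basis `1, ω, …, ω^(n-1)` is `J`-symmetric:
`J ⬝ Xᵀ ⬝ J = X` for every matrix `X` in the image. -/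
theorem regular_embedding_J_symmetric
    {F E : Type*} [Field F] [Field E] [Algebra F E]
    (hF : ringChar F ≠ 2) {n : ℕ} (hn : 1 < n) (τ : F)
    (hirr : Irreducible (Polynomial.X ^ n - Polynomial.C τ : Polynomial F))
    (ω : E) (hω : ω ^ n = algebraMap F E τ)
    (b : Module.Basis (Fin n) F E) (hb : ∀ i : Fin n, b i = ω ^ (i : ℕ)) :
    ∀ x : E,
      Jmat n F * (Algebra.leftMulMatrix b x)ᵀ * Jmat n F = Algebra.leftMulMatrix b x :=
  regular_embedding_J_symmetric_general τ ω hω b hb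
end

section
/- Let F ⊂ L ⊂ E be a tower of fields with [L:F] = r, [E:L] = s, n = rs. Suppose L is embedded in M_r(F) via an F-embedding whose image consists of J_r-symmetric matrices, and E is embedded in M_s(L) via an L-embedding whose image consists of J_s-symmetric matrices. Then the composite embedding of E in M_n(F) = M_s(M_r(F)) has image consisting of J_n-symmetric matrices. -/
/-!
Conjugating `Aᵀ` by the permutation matrix of an involution `σ` gives the matrix with entries
`A (σ b) (σ a)`, so `J_m`-symmetry says `A j.rev i.rev = A i j`. On the product index,
reversing `(i, k)` and `(j, l)` reverses the outer indices of `κ x`, which is undone by the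
symmetry of `κ`, and then the inner indices of `ι (κ x i j)`, undone by the symmetry of `ι`.
-/

open Matrix

theorem Matrix.mul_transpose_mul_apply_of_involutive {ι K : Type*} [Fintype ι] [DecidableEq ι]
    [Semiring K] {σ : ι → ι} (hσ : Function.Involutive σ) {J : Matrix ι ι K}
    (hJ : ∀ a b, J a b = if b = σ a then 1 else 0) (A : Matrix ι ι K) (a b : ι) :
    (J * Aᵀ * J) a b = A (σ b) (σ a) := by
  have hσb : ∀ c, b = σ c ↔ c = σ b := fun c => by rw [eq_comm, hσ.eq_iff]
  simp [Matrix.mul_apply, hJ, hσb]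

theorem Jmat_mul_transpose_mul_apply {n : ℕ} {K : Type*} [Field K]
    (A : Matrix (Fin n) (Fin n) K) (i j : Fin n) :
    (Jmat n K * Aᵀ * Jmat n K) i j = A j.rev i.rev :=
  mul_transpose_mul_apply_of_involutive Fin.rev_involutive (fun _ _ => rfl) A i j

theorem apply_rev_rev_of_Jmat_symmetric {n : ℕ} {K : Type*} [Field K]
    {A : Matrix (Fin n) (Fin n) K} (hA : Jmat n K * Aᵀ * Jmat n K = A) (i j : Fin n) :
    A j.rev i.rev = A i j := by
  have h := Jmat_mul_transpose_mul_apply A i j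
  rwa [hA, eq_comm] at h

/-- `M_n(F)` is realized as matrices indexed by `Fin s × Fin r` (the lexicographic
identification with `Fin n`), under which `J_n` sends `(i, k)` to `(i.rev, k.rev)`. -/
theorem composite_embedding_J_symmetric_general
    {F L E : Type*} [Field F] [Field L] [Field E]
    [Algebra F L] [Algebra L E]
    {r s : ℕ}
    (ι : L →ₐ[F] Matrix (Fin r) (Fin r) F)
    (hι : ∀ y : L, Jmat r F * (ι y)ᵀ * Jmat r F = ι y)
    (κ : E →ₐ[L] Matrix (Fin s) (Fin s) L)
    (hκ : ∀ x : E, Jmat s L * (κ x)ᵀ * Jmat s L = κ x)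
    -- the composite embedding, written entrywise
    (C : E → Matrix (Fin s × Fin r) (Fin s × Fin r) F)
    (hC : ∀ (x : E) (i j : Fin s) (k l : Fin r), C x (i, k) (j, l) = ι (κ x i j) k l)
    -- the antidiagonal matrix `J_n` on the product index
    (Jn : Matrix (Fin s × Fin r) (Fin s × Fin r) F)
    (hJn : ∀ a b : Fin s × Fin r, Jn a b = if b = (a.1.rev, a.2.rev) then 1 else 0) :
    ∀ x : E, Jn * (C x)ᵀ * Jn = C x := by
  have hrev : Function.Involutive fun a : Fin s × Fin r => (a.1.rev, a.2.rev) :=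
    fun a => by simp
  intro x
  ext ⟨i, k⟩ ⟨j, l⟩
  rw [mul_transpose_mul_apply_of_involutive hrev hJn, hC, hC,
    apply_rev_rev_of_Jmat_symmetric (hκ x), apply_rev_rev_of_Jmat_symmetric (hι _)]

/-- If `L` is embedded `J_r`-symmetrically in `M_r(F)` and `E` is embedded
`J_s`-symmetrically in `M_s(L)`, then the composite embedding of `E` in
`M_n(F) = M_s(M_r(F))` (with `n = rs`) is `J_n`-symmetric.  Here `M_n(F)` is realized
as matrices indexed by `Fin s × Fin r` (lexicographic identification with `Fin n`),
under which `J_n` sends `(i,k)` to `(i.rev, k.rev)`. -/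
theorem composite_embedding_J_symmetric
    {F L E : Type*} [Field F] [Field L] [Field E]
    [Algebra F L] [Algebra L E]
    (hF : ringChar F ≠ 2)
    {r s : ℕ} (hr : Module.finrank F L = r) (hs : Module.finrank L E = s)
    (ι : L →ₐ[F] Matrix (Fin r) (Fin r) F)
    (hι : ∀ y : L, Jmat r F * (ι y)ᵀ * Jmat r F = ι y)
    (κ : E →ₐ[L] Matrix (Fin s) (Fin s) L)
    (hκ : ∀ x : E, Jmat s L * (κ x)ᵀ * Jmat s L = κ x)
    -- the composite embedding, written entrywise
    (C : E → Matrix (Fin s × Fin r) (Fin s × Fin r) F)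
    (hC : ∀ (x : E) (i j : Fin s) (k l : Fin r), C x (i, k) (j, l) = ι (κ x i j) k l)
    -- the antidiagonal matrix `J_n` on the product index
    (Jn : Matrix (Fin s × Fin r) (Fin s × Fin r) F)
    (hJn : ∀ a b : Fin s × Fin r, Jn a b = if b = (a.1.rev, a.2.rev) then 1 else 0) :
    ∀ x : E, Jn * (C x)ᵀ * Jn = C x :=
  composite_embedding_J_symmetric_general ι hι κ hκ C hC Jn hJn
end

section
/- Let E/F be a degree n field extension (char F ≠ 2) embedded in M_n(F) via a J-symmetric embedding x ↦ x̲. Then the set of symmetric matrices ν ∈ GL_n(F) such that x̲ = ν^{-1}·x̲ᵀ·ν for every x ∈ E is exactly J·E̲^× (the set of products Jx̲ for x ∈ E^×). Moreover, for x ∈ E^×, det(J·x̲) = (−1)^{n(n−1)/2}·N_{E/F}(x). -/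
open Matrix

/-!
Since `dim_F Fⁿ = [E : F]`, the embedding makes `Fⁿ` a one-dimensional `E`-vector space: for any
`v ≠ 0` the orbit map `x ↦ ι x v` is an `F`-isomorphism `E ≃ Fⁿ` carrying multiplication by `x`
to `ι x`. Hence `ι E` is its own centraliser and `det (ι x) = N_{E/F}(x)`. As `(ι x)ᵀ = J (ι x) J`,
the condition `ι x = ν⁻¹ (ι x)ᵀ ν` says exactly that `J ν` commutes with `ι E`, i.e. `ν ∈ J (ι E)`.
Finally `J` is the matrix of the reversal permutation, whose sign is `(-1) ^ (n(n-1)/2)`.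
-/

open Equiv

theorem Fin.revPerm_succ (n : ℕ) :
    (Fin.revPerm : Perm (Fin (n + 1))) =
      finRotate (n + 1) * (Fin.revPerm : Perm (Fin n)).extendDomain (Fin.castLEquiv n.le_succ) := by
  ext i
  induction i using Fin.lastCases with
  | last =>
    rw [Perm.mul_apply, Perm.extendDomain_apply_not_subtype _ _ (by simp), finRotate_last]
    simp
  | cast j =>
    rw [Perm.mul_apply, Perm.extendDomain_apply_subtype _ _ (by simp)]
    have hj := j.isLt
    simp [Fin.val_rev, Fin.val_add, Nat.mod_eq_of_lt (show n - (j + 1) + 1 < n + 1 by omega)]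
    omega

theorem Fin.sign_revPerm (n : ℕ) :
    Perm.sign (Fin.revPerm : Perm (Fin n)) = (-1) ^ (n * (n - 1) / 2) := by
  induction n with
  | zero => rfl
  | succ n ih =>
    rw [Fin.revPerm_succ, Perm.sign_mul, sign_finRotate, Perm.sign_extendDomain, ih,
      ← pow_add, Nat.triangle_succ]
    congr 1
    omega

theorem Jmat_eq_permMatrix (n : ℕ) (F : Type*) [Field F] :
    Jmat n F = (Fin.revPerm : Perm (Fin n)).permMatrix F := by
  ext i j
  simp [Jmat, Perm.permMatrix, PEquiv.toMatrix, eq_comm]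

theorem det_Jmat (n : ℕ) (F : Type*) [Field F] :
    (Jmat n F).det = (-1) ^ (n * (n - 1) / 2) := by
  rw [Jmat_eq_permMatrix, det_permutation, Fin.sign_revPerm]
  simp

theorem Jmat_transpose (n : ℕ) (F : Type*) [Field F] : (Jmat n F)ᵀ = Jmat n F := by
  ext i j
  simp only [transpose_apply, Jmat, of_apply]
  simp_rw [eq_comm (a := j), Fin.rev_eq_iff]

theorem Jmat_mul_self (n : ℕ) (F : Type*) [Field F] : Jmat n F * Jmat n F = 1 := by
  have : (Fin.revPerm : Perm (Fin n)) * Fin.revPerm = 1 := Perm.ext Fin.rev_rev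
  rw [Jmat_eq_permMatrix, ← permMatrix_mul, this, permMatrix_one]

open Module

namespace AlgHom

variable {F E : Type*} [Field F] [Field E] [Algebra F E]

section Endomorphism

variable {V : Type*} [AddCommGroup V] [Module F V] (ι : E →ₐ[F] Module.End F V)

def orbitMap (v : V) : E →ₗ[F] V := LinearMap.applyₗ v ∘ₗ ι.toLinearMap

@[simp] theorem orbitMap_apply (v : V) (x : E) : ι.orbitMap v x = ι x v := rfl

theorem orbitMap_mul (v : V) (x y : E) : ι.orbitMap v (x * y) = ι x (ι.orbitMap v y) := by
  rw [orbitMap_apply, map_mul, Module.End.mul_apply, orbitMap_apply]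

theorem orbitMap_injective {v : V} (hv : v ≠ 0) : Function.Injective (ι.orbitMap v) := by
  refine (injective_iff_map_eq_zero _).2 fun x hx => ?_
  by_contra hx0
  apply hv
  calc v = ι.orbitMap v (x⁻¹ * x) := by
        rw [inv_mul_cancel₀ hx0, orbitMap_apply, map_one, Module.End.one_apply]
    _ = 0 := by rw [orbitMap_mul, hx, map_zero]

variable [FiniteDimensional F E] [FiniteDimensional F V] (hV : finrank F V = finrank F E)
include hV

noncomputable def orbitEquiv {v : V} (hv : v ≠ 0) : E ≃ₗ[F] V :=
  (ι.orbitMap v).linearEquivOfInjective (ι.orbitMap_injective hv) hV.symm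

theorem orbitEquiv_mul {v : V} (hv : v ≠ 0) (x y : E) :
    ι.orbitEquiv hV hv (x * y) = ι x (ι.orbitEquiv hV hv y) :=
  ι.orbitMap_mul v x y

theorem exists_eq_of_forall_commute {f : Module.End F V} (hf : ∀ x, Commute f (ι x)) :
    ∃ y, f = ι y := by
  obtain ⟨v, hv⟩ := (finrank_pos_iff_exists_ne_zero (R := F) (M := V)).1 (hV ▸ finrank_pos)
  let e := ι.orbitEquiv hV hv
  refine ⟨e.symm (f (e 1)), LinearMap.ext fun w => ?_⟩
  obtain ⟨z, rfl⟩ := e.surjective w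
  have hz : e z = ι z (e 1) := by rw [← orbitEquiv_mul, mul_one]
  calc f (e z) = ι z (f (e 1)) := by rw [hz, ← Module.End.mul_apply, (hf z).eq]; rfl
    _ = e (z * e.symm (f (e 1))) := by rw [orbitEquiv_mul, e.apply_symm_apply]
    _ = ι (e.symm (f (e 1))) (e z) := by rw [mul_comm, orbitEquiv_mul]

theorem det_eq_norm (x : E) : LinearMap.det (ι x) = Algebra.norm F x := by
  obtain ⟨v, hv⟩ := (finrank_pos_iff_exists_ne_zero (R := F) (M := V)).1 (hV ▸ finrank_pos)
  let e := ι.orbitEquiv hV hv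
  have hconj : e.toLinearMap ∘ₗ Algebra.lmul F E x ∘ₗ e.symm.toLinearMap = ι x := by
    refine LinearMap.ext fun w => ?_
    obtain ⟨z, rfl⟩ := e.surjective w
    simp [e, orbitEquiv_mul]
  rw [← hconj, LinearMap.det_conj, Algebra.norm_apply]

end Endomorphism

section Matrix

variable [FiniteDimensional F E] {m : Type*} [Fintype m] [DecidableEq m]
  (ι : E →ₐ[F] Matrix m m F) (hm : Fintype.card m = finrank F E)
include hm

theorem matrix_exists_eq_of_forall_commute {B : Matrix m m F} (hB : ∀ x, Commute B (ι x)) :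
    ∃ y, B = ι y := by
  let ιEnd := (toLinAlgEquiv' : Matrix m m F ≃ₐ[F] _).toAlgHom.comp ι
  have hV : finrank F (m → F) = finrank F E := (finrank_fintype_fun_eq_card F).trans hm
  obtain ⟨y, hy⟩ := ιEnd.exists_eq_of_forall_commute hV fun x => (hB x).map toLinAlgEquiv'
  exact ⟨y, toLinAlgEquiv'.injective hy⟩

theorem matrix_det_eq_norm (x : E) : (ι x).det = Algebra.norm F x := by
  let ιEnd := (toLinAlgEquiv' : Matrix m m F ≃ₐ[F] _).toAlgHom.comp ι
  have hV : finrank F (m → F) = finrank F E := (finrank_fintype_fun_eq_card F).trans hm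
  rw [← ιEnd.det_eq_norm hV, ← LinearMap.det_toLin']
  rfl

end Matrix

end AlgHom

namespace Matrix

variable {m R : Type*} [Fintype m] [DecidableEq m] [CommRing R] {J A : Matrix m m R}

theorem transpose_eq_of_mul_transpose_mul_eq (hJ : J * J = 1) (hA : J * Aᵀ * J = A) :
    Aᵀ = J * A * J :=
  calc Aᵀ = J * J * Aᵀ * (J * J) := by rw [hJ, one_mul, mul_one]
    _ = J * (J * Aᵀ * J) * J := by simp only [mul_assoc]
    _ = J * A * J := by rw [hA]

theorem eq_inv_mul_mul_iff_commute {u : Matrix m m R} (hu : IsUnit u) :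
    A = u⁻¹ * A * u ↔ Commute u A := by
  obtain ⟨U, rfl⟩ := hu
  rw [← coe_units_inv, mul_assoc, Units.eq_inv_mul_iff_mul_eq, Commute, SemiconjBy]

theorem eq_inv_mul_transpose_mul_iff_commute {ν : Matrix m m R} (hJ : J * J = 1) (hν : IsUnit ν)
    (hA : J * Aᵀ * J = A) : A = ν⁻¹ * Aᵀ * ν ↔ Commute (J * ν) A := by
  have hconj : ν⁻¹ * Aᵀ * ν = (J * ν)⁻¹ * A * (J * ν) := by
    rw [transpose_eq_of_mul_transpose_mul_eq hJ hA, mul_inv_rev, inv_eq_left_inv hJ]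
    noncomm_ring
  rw [hconj, eq_inv_mul_mul_iff_commute ((IsUnit.of_mul_eq_one J hJ).mul hν)]

end Matrix

theorem nu_symmetric_matrices_eq_J_mul_torus_general
    {F E : Type*} [Field F] [Field E] [Algebra F E] [FiniteDimensional F E]
    {n : ℕ} (hn : Module.finrank F E = n)
    (ι : E →ₐ[F] Matrix (Fin n) (Fin n) F)
    (hsym : ∀ x : E, Jmat n F * (ι x)ᵀ * Jmat n F = ι x) :
    ({ν : Matrix (Fin n) (Fin n) F | νᵀ = ν ∧ IsUnit ν ∧
        ∀ x : E, ι x = ν⁻¹ * (ι x)ᵀ * ν} =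
      {ν : Matrix (Fin n) (Fin n) F | ∃ x : E, x ≠ 0 ∧ ν = Jmat n F * ι x}) ∧
    ∀ x : E, x ≠ 0 →
      (Jmat n F * ι x).det = (-1) ^ (n * (n - 1) / 2) * Algebra.norm F x := by
  set J := Jmat n F
  have hJJ : J * J = 1 := Jmat_mul_self n F
  have hJ : IsUnit J := .of_mul_eq_one J hJJ
  have hcard : Fintype.card (Fin n) = finrank F E := (Fintype.card_fin n).trans hn.symm
  refine ⟨Set.ext fun ν => ⟨?_, ?_⟩, fun x _ => by
    rw [det_mul, det_Jmat, ι.matrix_det_eq_norm hcard]⟩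
  · rintro ⟨-, hν, hν_conj⟩
    obtain ⟨x, hx⟩ := ι.matrix_exists_eq_of_forall_commute hcard fun y =>
      (eq_inv_mul_transpose_mul_iff_commute hJJ hν (hsym y)).1 (hν_conj y)
    have hν_eq : ν = J * ι x := by rw [← hx, ← mul_assoc, hJJ, one_mul]
    refine ⟨x, fun hx0 => ?_, hν_eq⟩
    have : Nonempty (Fin n) := ⟨⟨0, hn ▸ finrank_pos⟩⟩
    rw [hν_eq, hx0, map_zero, mul_zero] at hν
    exact not_isUnit_zero hν
  · rintro ⟨x, hx, rfl⟩
    have hunit : IsUnit (J * ι x) := hJ.mul ((IsUnit.mk0 x hx).map ι)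
    refine ⟨?_, hunit, fun y => (eq_inv_mul_transpose_mul_iff_commute hJJ hunit (hsym y)).2 ?_⟩
    · rw [transpose_mul, transpose_eq_of_mul_transpose_mul_eq hJJ (hsym x), Jmat_transpose,
        mul_assoc, hJJ, mul_one]
    · rw [← mul_assoc, hJJ, one_mul]
      exact (Commute.all x y).map ι

/-- If `E/F` (degree `n`, char `F ≠ 2`) is embedded `J`-symmetrically in
`M_n(F)` via `x ↦ ι x`, then the symmetric invertible matrices `ν` for which the
embedding is `ν`-symmetric are exactly those of the form `J ⬝ ι x` with `x ∈ E^×`;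
moreover `det (J ⬝ ι x) = (-1)^(n(n-1)/2) ⬝ N_{E/F}(x)`. -/
theorem nu_symmetric_matrices_eq_J_mul_torus
    {F E : Type*} [Field F] [Field E] [Algebra F E] [FiniteDimensional F E]
    (hF : ringChar F ≠ 2) {n : ℕ} (hn : Module.finrank F E = n)
    (ι : E →ₐ[F] Matrix (Fin n) (Fin n) F)
    (hsym : ∀ x : E, Jmat n F * (ι x)ᵀ * Jmat n F = ι x) :
    ({ν : Matrix (Fin n) (Fin n) F | νᵀ = ν ∧ IsUnit ν ∧
        ∀ x : E, ι x = ν⁻¹ * (ι x)ᵀ * ν} =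
      {ν : Matrix (Fin n) (Fin n) F | ∃ x : E, x ≠ 0 ∧ ν = Jmat n F * ι x}) ∧
    ∀ x : E, x ≠ 0 →
      (Jmat n F * ι x).det = (-1) ^ (n * (n - 1) / 2) * Algebra.norm F x :=
  nu_symmetric_matrices_eq_J_mul_torus_general hn ι hsym
end

section
/- Let 𝒢₁ ⊇ 𝒢₂ ⊇ … be a descending sequence of groups with each 𝒢_{i+1} normal in 𝒢_i and each index [𝒢_i : 𝒢_{i+1}] finite and odd. Let 𝒮 be a nonempty set on which 𝒢₁ acts transitively, such that for every descending chain 𝒪₁ ⊇ 𝒪₂ ⊇ … where 𝒪_i is a 𝒢_i-orbit, the intersection ∩_i 𝒪_i is a singleton. Let α be a permutation of 𝒮 of order at most two satisfying α(𝒢_i·x) = 𝒢_i·α(x) for all i and x ∈ 𝒮. Then α has a fixed point in 𝒮. -/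
/-!
If `N` is normal in `H` of odd index, the `N`-orbits inside an `H`-orbit form a single orbit
of `H` acting on sets, with stabiliser containing `N`, so there is an odd number of them.
An involution `α` respecting both orbit partitions and stabilising an `H`-orbit therefore
stabilises one of the `N`-orbits inside it. Starting from the single `chain 0`-orbit `S`, this
yields a descending chain of `α`-stable orbits; its intersection `{a}` is `α`-stable, so
`α a = a`.
-/

open MulAction Function Pointwise

theorem Function.Involutive.exists_fixed_of_odd_card {Q : Type*} [Finite Q] {f : Q → Q}
    (hf : Involutive f) (hQ : Odd (Nat.card Q)) : ∃ q, f q = q := by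
  classical
  have := Fintype.ofFinite Q
  have hmod := Equiv.Perm.card_fixedPoints_modEq (p := 2) (n := 1) (f := f) (funext hf)
  rw [← Nat.card_eq_fintype_card, ← Nat.card_eq_fintype_card] at hmod
  have hodd : Odd (Nat.card (fixedPoints f)) := by
    rwa [Nat.odd_iff, ← hmod, ← Nat.odd_iff]
  obtain ⟨⟨q, hq⟩⟩ := (Nat.card_pos_iff.mp hodd.pos).1
  exact ⟨q, hq⟩

theorem Subgroup.normal_subgroupOf_of_conj_mem {G : Type*} [Group G] {N H : Subgroup G}
    (hconj : ∀ g ∈ H, ∀ n ∈ N, g * n * g⁻¹ ∈ N) : (N.subgroupOf H).Normal :=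
  ⟨fun n hn g => hconj g g.2 n hn⟩

namespace MulAction

section NormalSubgroup

variable {H S : Type*} [Group H] [MulAction H S] {N : Subgroup H} [N.Normal]

theorem mem_orbit_orbit_iff {x : S} {B : Set S} :
    B ∈ orbit H (orbit N x) ↔ ∃ y ∈ orbit H x, B = orbit N y := by
  constructor
  · rintro ⟨h, rfl⟩
    exact ⟨h • x, mem_orbit x h, smul_orbit_eq_orbit_smul N x h⟩
  · rintro ⟨_, ⟨h, rfl⟩, rfl⟩
    exact ⟨h, smul_orbit_eq_orbit_smul N x h⟩

theorem le_stabilizer_orbit (x : S) : N ≤ stabilizer H (orbit N x) := fun n hn => by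
  rw [mem_stabilizer_iff, smul_orbit_eq_orbit_smul]
  exact orbit_smul (⟨n, hn⟩ : N) x

theorem odd_ncard_orbit_orbit (hN : Odd N.index) (x : S) :
    Odd (orbit H (orbit N x)).ncard := by
  rw [← index_stabilizer]
  exact hN.of_dvd_nat (Subgroup.index_dvd_of_le (le_stabilizer_orbit x))

theorem exists_mem_orbit_apply_mem_orbit_of_odd_index (hN : Odd N.index) {α : S → S}
    (hα : Involutive α) (hαN : ∀ y, α '' orbit N y = orbit N (α y)) {x : S}
    (hx : Set.MapsTo α (orbit H x) (orbit H x)) : ∃ y ∈ orbit H x, α y ∈ orbit N y := by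
  set Ω := orbit H (orbit N x)
  have hΩ : ∀ B ∈ Ω, α '' B ∈ Ω := by
    intro B hB
    obtain ⟨y, hy, rfl⟩ := mem_orbit_orbit_iff.mp hB
    exact mem_orbit_orbit_iff.mpr ⟨α y, hx hy, hαN y⟩
  have : Finite Ω := Set.finite_of_ncard_ne_zero (odd_ncard_orbit_orbit hN x).pos.ne'
  have hβ : Involutive (fun B : Ω => (⟨α '' B, hΩ B B.2⟩ : Ω)) := fun B =>
    Subtype.ext <| by simp only [Set.image_image, hα _, Set.image_id']
  obtain ⟨⟨B, hB⟩, hfix⟩ := hβ.exists_fixed_of_odd_card <| by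
    rw [Nat.card_coe_set_eq]
    exact odd_ncard_orbit_orbit hN x
  obtain ⟨y, hy, rfl⟩ := mem_orbit_orbit_iff.mp hB
  have hstable : α '' orbit N y = orbit N y := congrArg Subtype.val hfix
  exact ⟨y, hy, hstable ▸ Set.mem_image_of_mem α (mem_orbit_self y)⟩

end NormalSubgroup

section Subgroups

variable {G S : Type*} [Group G] [MulAction G S] {N H : Subgroup G}

theorem orbit_subset_orbit_of_le (hNH : N ≤ H) (x : S) : orbit N x ⊆ orbit H x := by
  rintro _ ⟨⟨g, hg⟩, rfl⟩
  exact ⟨⟨g, hNH hg⟩, rfl⟩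

theorem orbit_subgroupOf (hNH : N ≤ H) (x : S) : orbit (N.subgroupOf H) x = orbit N x := by
  ext y
  constructor
  · rintro ⟨⟨⟨g, _⟩, hg⟩, rfl⟩
    exact ⟨⟨g, hg⟩, rfl⟩
  · rintro ⟨⟨g, hg⟩, rfl⟩
    exact ⟨⟨⟨g, hNH hg⟩, hg⟩, rfl⟩

theorem image_orbit_eq_of_apply_mem_orbit {α : S → S} {x : S}
    (hαH : α '' orbit H x = orbit H (α x)) (hx : α x ∈ orbit H x) :
    α '' orbit H x = orbit H x :=
  hαH.trans (orbit_eq_iff.mpr hx)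

theorem exists_mem_orbit_apply_mem_orbit_of_odd_relIndex (hNH : N ≤ H)
    [(N.subgroupOf H).Normal] (hodd : Odd (N.relIndex H)) {α : S → S} (hα : Involutive α)
    (hαN : ∀ y, α '' orbit N y = orbit N (α y)) {x : S}
    (hαH : α '' orbit H x = orbit H (α x)) (hx : α x ∈ orbit H x) :
    ∃ y ∈ orbit H x, α y ∈ orbit N y := by
  have hmaps : Set.MapsTo α (orbit H x) (orbit H x) := fun y hy =>
    image_orbit_eq_of_apply_mem_orbit hαH hx ▸ Set.mem_image_of_mem α hy
  simpa only [orbit_subgroupOf hNH] using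
    exists_mem_orbit_apply_mem_orbit_of_odd_index hodd hα
      (by simpa only [orbit_subgroupOf hNH] using hαN) hmaps

end Subgroups

end MulAction

theorem fixed_point_of_odd_index_chain_general
    {G S : Type*} [Group G] [MulAction G S] [Nonempty S]
    (chain : ℕ → Subgroup G)
    (h0 : chain 0 = ⊤)
    (hanti : ∀ i, chain (i + 1) ≤ chain i)
    (hnormal : ∀ i, ∀ g ∈ chain i, ∀ h ∈ chain (i + 1), g * h * g⁻¹ ∈ chain (i + 1))
    (hodd : ∀ i, Odd ((chain (i + 1)).relIndex (chain i)))
    (htrans : ∀ x y : S, ∃ g : G, g • x = y)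
    (hchain : ∀ O : ℕ → Set S,
      (∀ i, ∃ x : S, O i = MulAction.orbit ↥(chain i) x) →
      (∀ i, O (i + 1) ⊆ O i) →
      ∃ a : S, (⋂ i, O i) = {a})
    (α : Equiv.Perm S) (hα2 : ∀ x : S, α (α x) = x)
    (hequiv : ∀ (i : ℕ) (x : S),
      α '' (MulAction.orbit ↥(chain i) x) = MulAction.orbit ↥(chain i) (α x)) :
    ∃ x : S, α x = x := by
  have step : ∀ i x, α x ∈ orbit (chain i) x →
      ∃ y ∈ orbit (chain i) x, α y ∈ orbit (chain (i + 1)) y := fun i x hx =>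
    have := Subgroup.normal_subgroupOf_of_conj_mem (hnormal i)
    exists_mem_orbit_apply_mem_orbit_of_odd_relIndex (hanti i) (hodd i) hα2 (hequiv (i + 1))
      (hequiv i x) hx
  obtain ⟨x₀⟩ := ‹Nonempty S›
  have base : α x₀ ∈ orbit (chain 0) x₀ := by
    obtain ⟨g, hg⟩ := htrans x₀ (α x₀)
    exact ⟨⟨g, h0 ▸ Subgroup.mem_top g⟩, hg⟩
  choose! next hnext_mem hnext_fix using step
  let x : ℕ → S := fun n => Nat.rec x₀ next n
  have hx : ∀ i, α (x i) ∈ orbit (chain i) (x i) := fun i =>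
    Nat.rec base (fun i ih => hnext_fix i (x i) ih) i
  let O : ℕ → Set S := fun i => orbit (chain i) (x i)
  have hdesc : ∀ i, O (i + 1) ⊆ O i := fun i =>
    (orbit_subset_orbit_of_le (hanti i) _).trans
      (orbit_eq_iff.mpr (hnext_mem i (x i) (hx i))).subset
  obtain ⟨a, ha⟩ := hchain O (fun i => ⟨x i, rfl⟩) hdesc
  have haO : ∀ i, a ∈ O i := Set.mem_iInter.mp (ha ▸ rfl)
  have hstable : ∀ i, α '' O i = O i := fun i =>
    image_orbit_eq_of_apply_mem_orbit (hequiv i _) (hx i)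
  have hαa : α a ∈ ⋂ i, O i := Set.mem_iInter.mpr fun i =>
    hstable i ▸ Set.mem_image_of_mem α (haO i)
  rw [ha] at hαa
  exact ⟨a, hαa⟩

/-- Let `𝒢₁ ⊇ 𝒢₂ ⊇ …` be a descending sequence of groups, each normal
in the previous one and of finite odd index, acting (via the ambient group `G = 𝒢₁`,
here `chain 0 = ⊤`) transitively on a nonempty set `S`, such that the intersection of
any descending chain of orbits `𝒪_i` (an orbit of `chain i` for each `i`) is a
singleton.  If `α` is a permutation of `S` of order at most two permuting each family
of `chain i`-orbits, then `α` has a fixed point. -/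
theorem fixed_point_of_odd_index_chain
    {G S : Type*} [Group G] [MulAction G S] [Nonempty S]
    (chain : ℕ → Subgroup G)
    (h0 : chain 0 = ⊤)
    (hanti : ∀ i, chain (i + 1) ≤ chain i)
    (hnormal : ∀ i, ∀ g ∈ chain i, ∀ h ∈ chain (i + 1), g * h * g⁻¹ ∈ chain (i + 1))
    (hfin : ∀ i, (chain (i + 1)).relIndex (chain i) ≠ 0)
    (hodd : ∀ i, Odd ((chain (i + 1)).relIndex (chain i)))
    (htrans : ∀ x y : S, ∃ g : G, g • x = y)
    (hchain : ∀ O : ℕ → Set S,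
      (∀ i, ∃ x : S, O i = MulAction.orbit ↥(chain i) x) →
      (∀ i, O (i + 1) ⊆ O i) →
      ∃ a : S, (⋂ i, O i) = {a})
    (α : Equiv.Perm S) (hα2 : ∀ x : S, α (α x) = x)
    (hequiv : ∀ (i : ℕ) (x : S),
      α '' (MulAction.orbit ↥(chain i) x) = MulAction.orbit ↥(chain i) (α x)) :
    ∃ x : S, α x = x :=
  fixed_point_of_odd_index_chain_general chain h0 hanti hnormal hodd htrans hchain α hα2 hequiv
end
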